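/- arXiv:2003.08548 — 2 statements merged into one kernel-verified Lean document; each statement's English description precedes it below -/
import Mathlib

section
/- Let Φ be a CPTP map on a finite-dimensional matrix algebra, ρ₀ a density matrix, and Γ₀, Γ_τ positive definite density matrices (Gibbs states). Then β(ΔE − ΔF) + D(ρ₀‖Γ₀) = D(ρ₀‖Φ†(Γ_τ)) + Tr[ρ₀ L], where L := log(Φ†(Γ_τ)) − Φ†(log Γ_τ), ΔE := Tr[Φ(ρ₀)H_τ] − Tr[ρ₀H₀], Γ_t = exp(β(F_t − H_t)) with F_t = −β⁻¹ log Tr[exp(−βH_t)], ΔF := F_τ − F₀, and D(X‖Y) := Tr[X log X − X log Y] is the quantum relative entropy. -/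
open scoped Matrix ComplexOrder
variable {n : Type*} [Fintype n] [DecidableEq n]

/-- Apply a real function to a Hermitian matrix via its spectral decomposition. -/
noncomputable def matFun (f : ℝ → ℝ) (A : Matrix n n ℂ) : Matrix n n ℂ :=
  if hA : A.IsHermitian then
    (hA.eigenvectorUnitary : Matrix n n ℂ) *
      Matrix.diagonal (fun i => (f (hA.eigenvalues i) : ℂ)) *
      (star (hA.eigenvectorUnitary : Matrix n n ℂ))
  else 0

/-- Matrix logarithm. -/
noncomputable def mlog (A : Matrix n n ℂ) : Matrix n n ℂ := matFun Real.log A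

/-- Matrix square root. -/
noncomputable def msqrt (A : Matrix n n ℂ) : Matrix n n ℂ := matFun Real.sqrt A

/-- Umegaki relative entropy `D(X‖Y) = Tr[X log X − X log Y]`. -/
noncomputable def relEnt (X Y : Matrix n n ℂ) : ℝ :=
  (Matrix.trace (X * mlog X) - Matrix.trace (X * mlog Y)).re

/-- Quantum fidelity `F(ρ,σ) = Tr|√ρ√σ|`. -/
noncomputable def fidelity (ρ σ : Matrix n n ℂ) : ℝ :=
  (Matrix.trace (msqrt ((msqrt ρ * msqrt σ)ᴴ * (msqrt ρ * msqrt σ)))).re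

/-- Gibbs state `exp(−βH)/Tr exp(−βH)`. -/
noncomputable def gibbs (β : ℝ) (H : Matrix n n ℂ) : Matrix n n ℂ :=
  ((Matrix.trace (matFun Real.exp ((-β) • H))).re)⁻¹ • matFun Real.exp ((-β) • H)

/-- Equilibrium free energy `−β⁻¹ log Tr exp(−βH)`. -/
noncomputable def freeEnergy (β : ℝ) (H : Matrix n n ℂ) : ℝ :=
  -(β⁻¹ * Real.log ((Matrix.trace (matFun Real.exp ((-β) • H))).re))

/-- A density matrix: positive semidefinite with unit trace. -/
def IsDensity (ρ : Matrix n n ℂ) : Prop := ρ.PosSemidef ∧ ρ.trace = 1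

/-- Trace-preserving map. -/
def IsTP (Φ : Matrix n n ℂ → Matrix n n ℂ) : Prop := ∀ X, (Φ X).trace = X.trace

/-- Complete positivity: every ampliation `Φ ⊗ id_m` maps positive semidefinite
matrices to positive semidefinite matrices. -/
def IsCompletelyPositive (Φ : Matrix n n ℂ → Matrix n n ℂ) : Prop :=
  ∀ (m : ℕ) (M : Matrix (n × Fin m) (n × Fin m) ℂ), M.PosSemidef →
    (Matrix.of fun (p q : n × Fin m) => Φ (Matrix.of fun a b => M (a, p.2) (b, q.2)) p.1 q.1).PosSemidef

/-- CPTP: linear, completely positive, trace-preserving. -/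
def IsCPTP (Φ : Matrix n n ℂ → Matrix n n ℂ) : Prop :=
  IsLinearMap ℂ Φ ∧ IsCompletelyPositive Φ ∧ IsTP Φ

/-- `Φd` is the trace-dual (Hilbert–Schmidt adjoint) of `Φ`:
`Tr[Φ(X) Y] = Tr[X Φ†(Y)]` for all `X, Y`. -/
def IsTraceDual (Φ Φd : Matrix n n ℂ → Matrix n n ℂ) : Prop :=
  ∀ X Y, (Φ X * Y).trace = (X * Φd Y).trace

section Aux

lemma matFun_eq_cfc (f : ℝ → ℝ) {A : Matrix n n ℂ} (hA : A.IsHermitian) :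
    matFun f A = cfc f A := by
  rw [matFun, dif_pos hA, hA.cfc_eq f]
  rfl

lemma trace_matFun (f : ℝ → ℝ) {A : Matrix n n ℂ} (hA : A.IsHermitian) :
    (matFun f A).trace = ∑ i, (f (hA.eigenvalues i) : ℂ) := by
  rw [matFun, dif_pos hA, Matrix.trace_mul_cycle,
    (Unitary.mem_iff.mp hA.eigenvectorUnitary.2).1, Matrix.one_mul, Matrix.trace_diagonal]

omit [Fintype n] [DecidableEq n] in
lemma smul_isHermitian {r : ℝ} {A : Matrix n n ℂ} (hA : A.IsHermitian) :
    (r • A).IsHermitian := by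
  unfold Matrix.IsHermitian
  rw [Matrix.conjTranspose_smul, star_trivial, hA]

end Aux

lemma mlog_gibbs (β : ℝ) {H : Matrix n n ℂ} (hH : H.IsHermitian) (hne : Nonempty n) :
    mlog (gibbs β H) =
      (-β) • H -
        (Real.log ((Matrix.trace (matFun Real.exp ((-β) • H))).re)) • (1 : Matrix n n ℂ) := by
  set M := (-β) • H with hMdef
  have hM : M.IsHermitian := smul_isHermitian hH
  set c := (Matrix.trace (matFun Real.exp M)).re with hc
  have hcval : c = ∑ i, Real.exp (hM.eigenvalues i) := by
    rw [hc, trace_matFun Real.exp hM]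
    simp [Complex.re_sum, Complex.exp_ofReal_re]
  have hcpos : 0 < c := by
    rw [hcval]
    exact Finset.sum_pos (fun i _ => Real.exp_pos _) Finset.univ_nonempty
  have hgibbs : gibbs β H = cfc (fun x => c⁻¹ • Real.exp x) M := by
    rw [gibbs, ← hMdef, ← hc, matFun_eq_cfc Real.exp hM, cfc_smul c⁻¹ Real.exp M]
  have hsa : IsSelfAdjoint (gibbs β H) := by
    rw [hgibbs]; exact cfc_predicate _ _
  have hcomp : mlog (gibbs β H) = cfc (Real.log ∘ fun x => c⁻¹ • Real.exp x) M := by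
    rw [mlog, matFun_eq_cfc Real.log hsa, hgibbs,
      cfc_comp Real.log (fun x => c⁻¹ • Real.exp x) M hM.isSelfAdjoint ?_ ?_]
    · apply Real.continuousOn_log.mono
      rintro - ⟨x, -, rfl⟩
      simp only [Set.mem_compl_iff, Set.mem_singleton_iff, smul_eq_mul]
      positivity
    · fun_prop
  have hfun : (Real.log ∘ fun x => c⁻¹ • Real.exp x) = fun x : ℝ => x - Real.log c := by
    funext x
    simp only [Function.comp_apply, smul_eq_mul]
    rw [Real.log_mul (inv_ne_zero hcpos.ne') (Real.exp_ne_zero x), Real.log_inv, Real.log_exp]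
    ring
  rw [hcomp, hfun, cfc_sub (fun x : ℝ => x) (fun _ => Real.log c) M,
    cfc_id' ℝ M hM.isSelfAdjoint, cfc_const _ _ hM.isSelfAdjoint,
    Algebra.algebraMap_eq_smul_one]

lemma trace_mul_shift (ρ H : Matrix n n ℂ) (β r : ℝ) :
    (Matrix.trace (ρ * ((-β) • H - r • (1 : Matrix n n ℂ)))).re
      = -β * (Matrix.trace (ρ * H)).re - r * (Matrix.trace ρ).re := by
  simp [Matrix.mul_sub, Matrix.mul_smul, Matrix.mul_one, Matrix.trace_sub, Matrix.trace_smul,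
    Complex.sub_re, Complex.real_smul, Complex.mul_re]
  try ring

/-- `β(ΔE − ΔF) + D(ρ₀‖Γ₀) = D(ρ₀‖Φ†(Γ_τ)) + Tr[ρ₀ L]`. -/
theorem stmt1_main_equality (Φ Φd : Matrix n n ℂ → Matrix n n ℂ)
    (hΦ : IsCPTP Φ) (hdual : IsTraceDual Φ Φd)
    (β : ℝ) (hβ : 0 < β)
    (H₀ Hτ : Matrix n n ℂ) (hH₀ : H₀.IsHermitian) (hHτ : Hτ.IsHermitian)
    (ρ₀ : Matrix n n ℂ) (hρ₀ : IsDensity ρ₀) :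
    β * (((Matrix.trace (Φ ρ₀ * Hτ)).re - (Matrix.trace (ρ₀ * H₀)).re)
          - (freeEnergy β Hτ - freeEnergy β H₀))
        + relEnt ρ₀ (gibbs β H₀)
      = relEnt ρ₀ (Φd (gibbs β Hτ))
        + (Matrix.trace (ρ₀ *
            (mlog (Φd (gibbs β Hτ)) - Φd (mlog (gibbs β Hτ))))).re := by
  obtain ⟨hlin, hcp, htp⟩ := hΦ
  have hρtr : ρ₀.trace = 1 := hρ₀.2
  have hne : Nonempty n := by
    rcases isEmpty_or_nonempty n with h | h
    · exfalso
      have h0 : ρ₀.trace = 0 := by simp [Matrix.trace]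
      rw [h0] at hρtr
      exact zero_ne_one hρtr
    · exact h
  have t1 : (Matrix.trace (ρ₀ * mlog (gibbs β H₀))).re
      = -β * (Matrix.trace (ρ₀ * H₀)).re
        - Real.log ((Matrix.trace (matFun Real.exp ((-β) • H₀))).re) := by
    rw [mlog_gibbs β hH₀ hne, trace_mul_shift, hρtr]
    simp
  have t2 : (Matrix.trace (Φ ρ₀ * mlog (gibbs β Hτ))).re
      = -β * (Matrix.trace (Φ ρ₀ * Hτ)).re
        - Real.log ((Matrix.trace (matFun Real.exp ((-β) • Hτ))).re) := by
    rw [mlog_gibbs β hHτ hne, trace_mul_shift, htp ρ₀, hρtr]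
    simp
  have t3 : (Matrix.trace (ρ₀ * (mlog (Φd (gibbs β Hτ)) - Φd (mlog (gibbs β Hτ))))).re
      = (Matrix.trace (ρ₀ * mlog (Φd (gibbs β Hτ)))).re
        - (Matrix.trace (Φ ρ₀ * mlog (gibbs β Hτ))).re := by
    rw [Matrix.mul_sub, Matrix.trace_sub, Complex.sub_re, ← hdual ρ₀ (mlog (gibbs β Hτ))]
  have hβ' : β ≠ 0 := hβ.ne'
  rw [relEnt, relEnt, freeEnergy, freeEnergy, Complex.sub_re, Complex.sub_re, t1, t3, t2]
  field_simp
  try ring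
end

section
/- Theorem (Tasaki-type second law for open processes): let Φ(ρ) := Tr_A[U(ρ ⊗ ρ_A)U†] with U unitary on S⊗A and ρ_A a density matrix on a d_A-dimensional ancilla, and let Γ be the Gibbs state of Hamiltonian H on S at inverse temperature β. Then the energy drop Δ_drop := Tr[ΓH] − Tr[Φ(Γ)H] satisfies Δ_drop ≤ β⁻¹ log d_A. -/
open scoped Matrix ComplexOrder
variable {n : Type*} [Fintype n] [DecidableEq n]

open scoped Kronecker

/-- Partial trace over the ancilla factor. -/
noncomputable def ptraceA {s a : Type*} [Fintype s] [Fintype a]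
    (M : Matrix (s × a) (s × a) ℂ) : Matrix s s ℂ :=
  Matrix.of fun i j => ∑ k, M (i, k) (j, k)

/-!
Write `H = ∑ᵢ Eᵢ Pᵢ` with rank-one spectral projectors `Pᵢ`, so that `Γ = ∑ⱼ pⱼ Pⱼ` with
`pⱼ ∝ exp (-β Eⱼ)`. For a positive trace-preserving map `Φ` the numbers `Tᵢⱼ = Tr[Pᵢ Φ(Pⱼ)]`
form a column-stochastic matrix, and the energy drop is
`β⁻¹ ∑ᵢⱼ Tᵢⱼ pⱼ log (pᵢ / pⱼ) ≤ β⁻¹ log ∑ᵢⱼ Tᵢⱼ pᵢ` by Jensen's inequality for `log`, with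
weights `Tᵢⱼ pⱼ`. The row sums of `T` are `Tr[Pᵢ Φ(1)]`, and for `Φ(ρ) = Tr_A[U (ρ ⊗ ρ_A) U†]`
one has `Φ(1) ≤ d_A` because `ρ_A ≤ 1`.
-/

open Matrix

section Jensen

variable {ι : Type*}

theorem sum_mul_log_le_log_sum_mul {t : Finset ι} {w x : ι → ℝ} (hw : ∀ i ∈ t, 0 ≤ w i)
    (hw₁ : ∑ i ∈ t, w i = 1) (hx : ∀ i ∈ t, 0 < x i) :
    ∑ i ∈ t, w i * Real.log (x i) ≤ Real.log (∑ i ∈ t, w i * x i) := by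
  simpa only [smul_eq_mul] using strictConcaveOn_log_Ioi.concaveOn.le_map_sum hw hw₁ hx

theorem sum_stochastic_mul_log_div_le_log [Fintype ι] {p : ι → ℝ} {T : ι → ι → ℝ} {c : ℝ}
    (hp : ∀ i, 0 < p i) (hp₁ : ∑ i, p i = 1) (hT : ∀ i j, 0 ≤ T i j)
    (hcol : ∀ j, ∑ i, T i j = 1) (hrow : ∀ i, ∑ j, T i j ≤ c) :
    ∑ i, ∑ j, T i j * p j * Real.log (p i / p j) ≤ Real.log c := by
  set w : ι × ι → ℝ := fun k => T k.1 k.2 * p k.2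
  set x : ι × ι → ℝ := fun k => p k.1 / p k.2
  have hw : ∀ k ∈ Finset.univ, 0 ≤ w k := fun k _ => mul_nonneg (hT _ _) (hp _).le
  have hw₁ : ∑ k, w k = 1 := by
    rw [Fintype.sum_prod_type, Finset.sum_comm]
    simp only [w, ← Finset.sum_mul, hcol, one_mul, hp₁]
  have hx : ∀ k ∈ Finset.univ, 0 < x k := fun k _ => div_pos (hp _) (hp _)
  have hwx : ∑ k, w k * x k = ∑ i, (∑ j, T i j) * p i := by
    simp only [w, x, Fintype.sum_prod_type, Finset.sum_mul]
    refine Finset.sum_congr rfl fun i _ => Finset.sum_congr rfl fun j _ => ?_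
    field_simp [(hp j).ne']
  have hpos : 0 < ∑ k, w k * x k := by
    simpa only [smul_eq_mul, Set.mem_Ioi] using (convex_Ioi (0 : ℝ)).sum_mem hw hw₁ hx
  calc ∑ i, ∑ j, T i j * p j * Real.log (p i / p j) = ∑ k, w k * Real.log (x k) := by
        rw [Fintype.sum_prod_type]
    _ ≤ Real.log (∑ k, w k * x k) := sum_mul_log_le_log_sum_mul hw hw₁ hx
    _ ≤ Real.log c := by
        refine Real.log_le_log hpos ?_
        calc ∑ k, w k * x k = ∑ i, (∑ j, T i j) * p i := hwx
          _ ≤ ∑ i, c * p i := Finset.sum_le_sum fun i _ => by gcongr; exacts [(hp i).le, hrow i]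
          _ = c := by rw [← Finset.mul_sum, hp₁, mul_one]

end Jensen

lemma re_trace_mul_sum_ofReal_smul {s ι : Type*} [Fintype s] (t : Finset ι) (A : Matrix s s ℂ)
    (d : ι → ℝ) (Y : ι → Matrix s s ℂ) :
    (A * ∑ j ∈ t, (d j : ℂ) • Y j).trace.re = ∑ j ∈ t, d j * (A * Y j).trace.re := by
  simp only [Finset.mul_sum, Matrix.mul_smul, trace_sum, trace_smul, smul_eq_mul, Complex.re_sum,
    Complex.re_ofReal_mul]

section ColumnProjectors

variable {s : Type*} [Fintype s] [DecidableEq s] {V : Matrix s s ℂ}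

def colProj (V : Matrix s s ℂ) (j : s) : Matrix s s ℂ := V * single j j 1 * star V

lemma trace_colProj_mul (i : s) (X : Matrix s s ℂ) :
    (colProj V i * X).trace = (star V * X * V) i i := by
  calc (colProj V i * X).trace = (single i i 1 * (star V * X * V)).trace := by
        rw [colProj, Matrix.mul_assoc, Matrix.mul_assoc, trace_mul_comm]
        simp only [Matrix.mul_assoc]
    _ = (star V * X * V) i i := by rw [trace_single_mul, one_smul]

lemma colProj_posSemidef (j : s) : (colProj V j).PosSemidef := by
  rw [colProj, star_eq_conjTranspose, ← diagonal_single]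
  exact (PosSemidef.diagonal (Pi.single_nonneg.mpr zero_le_one)).mul_mul_conjTranspose_same V

lemma re_trace_colProj_mul_nonneg {X : Matrix s s ℂ} (hX : X.PosSemidef) (i : s) :
    0 ≤ (colProj V i * X).trace.re := by
  rw [trace_colProj_mul, star_eq_conjTranspose]
  exact (Complex.nonneg_iff.mp (hX.conjTranspose_mul_mul_same V).diag_nonneg).1

lemma trace_colProj_mul_colProj (hV : star V * V = 1) (i j : s) :
    (colProj V i * colProj V j).trace = if i = j then 1 else 0 := by
  rw [trace_colProj_mul, colProj, ← Matrix.mul_assoc, ← Matrix.mul_assoc, hV, Matrix.one_mul,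
    Matrix.mul_assoc, hV, Matrix.mul_one, single_apply]
  simp [eq_comm]

lemma trace_colProj (hV : star V * V = 1) (j : s) : (colProj V j).trace = 1 := by
  simpa [hV] using trace_colProj_mul (V := V) j 1

lemma sum_colProj (hV : V * star V = 1) : ∑ j, colProj V j = 1 := by
  simp only [colProj, ← Finset.sum_mul, ← Finset.mul_sum, sum_single_one, Matrix.mul_one, hV]

lemma conj_diagonal_eq_sum_smul_colProj (d : s → ℂ) :
    V * diagonal d * star V = ∑ j, d j • colProj V j := by
  rw [← sum_single_eq_diagonal, Finset.mul_sum, Finset.sum_mul]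
  refine Finset.sum_congr rfl fun j _ => ?_
  rw [colProj, ← Matrix.smul_mul, ← Matrix.mul_smul, smul_single, smul_eq_mul, mul_one]

lemma trace_sum_smul_colProj (hV : star V * V = 1) (d : s → ℂ) :
    (∑ i, d i • colProj V i).trace = ∑ i, d i := by
  simp only [trace_sum, trace_smul, trace_colProj hV, smul_eq_mul, mul_one]

lemma posSemidef_sum_smul_colProj {d : s → ℝ} (hd : ∀ j, 0 ≤ d j) :
    (∑ j, (d j : ℂ) • colProj V j).PosSemidef :=
  posSemidef_sum _ fun j _ => (colProj_posSemidef j).smul (Complex.zero_le_real.mpr (hd j))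

end ColumnProjectors

section Spectral

variable {s : Type*} [Fintype s] [DecidableEq s]

lemma Matrix.IsHermitian.eq_sum_smul_colProj {A : Matrix s s ℂ} (hA : A.IsHermitian) :
    A = ∑ i, (hA.eigenvalues i : ℂ) • colProj hA.eigenvectorUnitary i := by
  conv_lhs => rw [hA.spectral_theorem, Unitary.conjStarAlgAut_apply]
  exact conj_diagonal_eq_sum_smul_colProj _

lemma matFun_eq_sum_smul_colProj (f : ℝ → ℝ) {A : Matrix s s ℂ} (hA : A.IsHermitian) :
    matFun f A = ∑ i, (f (hA.eigenvalues i) : ℂ) • colProj hA.eigenvectorUnitary i := by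
  rw [matFun, dif_pos hA, conj_diagonal_eq_sum_smul_colProj]

lemma Matrix.PosSemidef.posSemidef_trace_smul_one_sub {A : Matrix s s ℂ} (hA : A.PosSemidef) :
    (A.trace • 1 - A).PosSemidef := by
  have hspec := hA.1.eq_sum_smul_colProj
  have htr : A.trace = ∑ i, (hA.1.eigenvalues i : ℂ) := hA.1.trace_eq_sum_eigenvalues
  have hev := hA.eigenvalues_nonneg
  set ev := hA.1.eigenvalues
  set V := hA.1.eigenvectorUnitary
  have hdecomp : A.trace • 1 - A = ∑ i, ((∑ j, ev j - ev i : ℝ) : ℂ) • colProj V i := by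
    rw [htr, ← sum_colProj (Unitary.coe_mul_star_self V), Finset.smul_sum, hspec,
      ← Finset.sum_sub_distrib]
    refine Finset.sum_congr rfl fun i _ => ?_
    rw [Complex.ofReal_sub, Complex.ofReal_sum, sub_smul]
  rw [hdecomp]
  exact posSemidef_sum_smul_colProj fun i =>
    sub_nonneg.2 (Finset.single_le_sum (fun j _ => hev j) (Finset.mem_univ i))

lemma exists_gibbs_eq_sum_smul_colProj {β : ℝ} (hβ : β ≠ 0) {H : Matrix s s ℂ}
    (hH : H.IsHermitian) :
    ∃ (V : Matrix s s ℂ) (E : s → ℝ), star V * V = 1 ∧ V * star V = 1 ∧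
      H = ∑ i, (E i : ℂ) • colProj V i ∧
      gibbs β H =
        ∑ i, ((Real.exp (-β * E i) / ∑ j, Real.exp (-β * E j) : ℝ) : ℂ) • colProj V i := by
  have hA : ((-β) • H).IsHermitian := hH.smul (IsSelfAdjoint.all _)
  have hspec := hA.eq_sum_smul_colProj
  have hexp := matFun_eq_sum_smul_colProj Real.exp hA
  set μ := hA.eigenvalues
  set V := hA.eigenvectorUnitary
  have hV : star (V : Matrix s s ℂ) * V = 1 := Unitary.coe_star_mul_self V
  have hμ : ∀ i, -β * ((-β)⁻¹ * μ i) = μ i := fun i => by field_simp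
  refine ⟨V, fun i => (-β)⁻¹ * μ i, hV, Unitary.coe_mul_star_self V, ?_, ?_⟩
  · calc H = (-β)⁻¹ • ((-β) • H) := by
          rw [smul_smul, inv_mul_cancel₀ (neg_ne_zero.2 hβ), one_smul]
      _ = _ := by
          rw [hspec, Finset.smul_sum]
          refine Finset.sum_congr rfl fun i _ => ?_
          rw [← smul_assoc, Complex.real_smul, ← Complex.ofReal_mul]
  · simp only [hμ]
    rw [gibbs, hexp, trace_sum_smul_colProj hV, ← Complex.ofReal_sum, Complex.ofReal_re,
      Finset.smul_sum]
    refine Finset.sum_congr rfl fun i _ => ?_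
    rw [← smul_assoc, Complex.real_smul, ← Complex.ofReal_mul, div_eq_inv_mul]

end Spectral

theorem Matrix.kronecker_sub {l m n p α : Type*} [NonUnitalNonAssocRing α] (A : Matrix l m α)
    (B C : Matrix n p α) : A ⊗ₖ (B - C) = A ⊗ₖ B - A ⊗ₖ C := by
  ext
  simp [mul_sub]

section PartialTrace

variable {s a : Type*} [Fintype s] [Fintype a]

lemma ptraceA_eq_sum_submatrix (M : Matrix (s × a) (s × a) ℂ) :
    ptraceA M = ∑ k, M.submatrix (·, k) (·, k) := by
  ext i j
  simp [ptraceA, Matrix.sum_apply]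

lemma ptraceA_add (M N : Matrix (s × a) (s × a) ℂ) :
    ptraceA (M + N) = ptraceA M + ptraceA N := by
  ext i j
  simp [ptraceA, Finset.sum_add_distrib]

lemma ptraceA_sub (M N : Matrix (s × a) (s × a) ℂ) :
    ptraceA (M - N) = ptraceA M - ptraceA N := by
  ext i j
  simp [ptraceA, Finset.sum_sub_distrib]

lemma ptraceA_smul (c : ℂ) (M : Matrix (s × a) (s × a) ℂ) :
    ptraceA (c • M) = c • ptraceA M := by
  ext i j
  simp [ptraceA, Finset.mul_sum]

lemma trace_ptraceA (M : Matrix (s × a) (s × a) ℂ) : (ptraceA M).trace = M.trace := by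
  simp [ptraceA, trace, Fintype.sum_prod_type]

lemma ptraceA_one [DecidableEq s] [DecidableEq a] :
    ptraceA (1 : Matrix (s × a) (s × a) ℂ) = (Fintype.card a : ℂ) • 1 := by
  ext i j
  by_cases h : i = j <;> simp [ptraceA, one_apply, h]

lemma Matrix.PosSemidef.ptraceA {M : Matrix (s × a) (s × a) ℂ} (hM : M.PosSemidef) :
    (ptraceA M).PosSemidef := by
  rw [ptraceA_eq_sum_submatrix]
  exact posSemidef_sum _ fun k _ => hM.submatrix _

noncomputable def dilationChannel (U : Matrix (s × a) (s × a) ℂ) (ρA : Matrix a a ℂ) :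
    Matrix s s ℂ →ₗ[ℂ] Matrix s s ℂ where
  toFun ρ := ptraceA (U * (ρ ⊗ₖ ρA) * Uᴴ)
  map_add' X Y := by simp only [add_kronecker, Matrix.mul_add, Matrix.add_mul, ptraceA_add]
  map_smul' c X := by
    simp only [smul_kronecker, Matrix.mul_smul, Matrix.smul_mul, ptraceA_smul, RingHom.id_apply]

variable {U : Matrix (s × a) (s × a) ℂ} {ρA : Matrix a a ℂ}

lemma dilationChannel_apply (X : Matrix s s ℂ) :
    dilationChannel U ρA X = ptraceA (U * (X ⊗ₖ ρA) * Uᴴ) := rfl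

lemma dilationChannel_posSemidef (hρA : ρA.PosSemidef) {X : Matrix s s ℂ} (hX : X.PosSemidef) :
    (dilationChannel U ρA X).PosSemidef :=
  ((hX.kronecker hρA).mul_mul_conjTranspose_same U).ptraceA

lemma isTP_dilationChannel [DecidableEq s] [DecidableEq a] (hU : Uᴴ * U = 1)
    (hρA : ρA.trace = 1) : IsTP (dilationChannel U ρA) := fun X => by
  rw [dilationChannel_apply, trace_ptraceA, trace_mul_cycle, hU, Matrix.one_mul, trace_kronecker,
    hρA, mul_one]

lemma posSemidef_card_smul_one_sub_dilationChannel_one [DecidableEq s] [DecidableEq a]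
    (hU : U * Uᴴ = 1) (hρA : IsDensity ρA) :
    ((Fintype.card a : ℂ) • 1 - dilationChannel U ρA 1).PosSemidef := by
  have hsub :
      (Fintype.card a : ℂ) • 1 - dilationChannel U ρA 1 = dilationChannel U (1 - ρA) 1 := by
    rw [dilationChannel_apply, dilationChannel_apply, kronecker_sub, one_kronecker_one,
      Matrix.mul_sub, Matrix.sub_mul, Matrix.mul_one, hU, ptraceA_sub, ptraceA_one]
  have hle : (1 - ρA).PosSemidef := by
    simpa [hρA.2] using hρA.1.posSemidef_trace_smul_one_sub
  rw [hsub]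
  exact dilationChannel_posSemidef hle PosSemidef.one

end PartialTrace

section SecondLaw

variable {s : Type*} [Fintype s] [DecidableEq s] {V : Matrix s s ℂ}
  {Φ : Matrix s s ℂ →ₗ[ℂ] Matrix s s ℂ}

def transitionMatrix (V : Matrix s s ℂ) (Φ : Matrix s s ℂ →ₗ[ℂ] Matrix s s ℂ) (i j : s) : ℝ :=
  (colProj V i * Φ (colProj V j)).trace.re

lemma transitionMatrix_nonneg (hΦ : ∀ X : Matrix s s ℂ, X.PosSemidef → (Φ X).PosSemidef)
    (i j : s) : 0 ≤ transitionMatrix V Φ i j :=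
  re_trace_colProj_mul_nonneg (hΦ _ (colProj_posSemidef j)) i

lemma sum_transitionMatrix_left (hV : star V * V = 1) (hV' : V * star V = 1) (hΦ : IsTP Φ)
    (j : s) : ∑ i, transitionMatrix V Φ i j = 1 := by
  simp only [transitionMatrix]
  rw [← Complex.re_sum, ← trace_sum, ← Finset.sum_mul, sum_colProj hV', Matrix.one_mul, hΦ,
    trace_colProj hV, Complex.one_re]

lemma sum_transitionMatrix_right_le (hV : star V * V = 1) (hV' : V * star V = 1) {c : ℝ}
    (hc : ((c : ℂ) • 1 - Φ 1).PosSemidef) (i : s) : ∑ j, transitionMatrix V Φ i j ≤ c := by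
  have h := re_trace_colProj_mul_nonneg (V := V) hc i
  rw [Matrix.mul_sub, trace_sub, Complex.sub_re, Matrix.mul_smul, Matrix.mul_one, trace_smul,
    trace_colProj hV, smul_eq_mul, mul_one, Complex.ofReal_re, ← sum_colProj hV', map_sum,
    Finset.mul_sum, trace_sum, Complex.re_sum] at h
  simpa only [transitionMatrix, sub_nonneg] using h

lemma energy_drop_eq_sum_transitionMatrix (hV : star V * V = 1) (hV' : V * star V = 1)
    (hΦ : IsTP Φ) {E p : s → ℝ} {H Γ : Matrix s s ℂ} (hH : H = ∑ i, (E i : ℂ) • colProj V i)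
    (hΓ : Γ = ∑ i, (p i : ℂ) • colProj V i) :
    (Γ * H).trace.re - (Φ Γ * H).trace.re =
      ∑ i, ∑ j, transitionMatrix V Φ i j * p j * (E j - E i) := by
  have henergy : ∀ X, (X * H).trace.re = ∑ i, E i * (colProj V i * X).trace.re := fun X => by
    rw [hH, re_trace_mul_sum_ofReal_smul]
    simp only [trace_mul_comm X]
  have hΓ_pop : ∀ i, (colProj V i * Γ).trace.re = p i := fun i => by
    rw [hΓ, re_trace_mul_sum_ofReal_smul]
    simp [trace_colProj_mul_colProj hV, apply_ite Complex.re]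
  have hΦΓ_pop : ∀ i, (colProj V i * Φ Γ).trace.re = ∑ j, p j * transitionMatrix V Φ i j :=
    fun i => by simp only [hΓ, map_sum, map_smul, re_trace_mul_sum_ofReal_smul, transitionMatrix]
  have hgain : ∑ i, ∑ j, transitionMatrix V Φ i j * p j * E j = ∑ j, p j * E j := by
    rw [Finset.sum_comm]
    refine Finset.sum_congr rfl fun j _ => ?_
    rw [← Finset.sum_mul, ← Finset.sum_mul, sum_transitionMatrix_left hV hV' hΦ, one_mul]
  simp only [henergy, hΓ_pop, hΦΓ_pop, mul_sub, Finset.sum_sub_distrib, hgain]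
  congr 1
  · exact Finset.sum_congr rfl fun i _ => mul_comm _ _
  · refine Finset.sum_congr rfl fun i _ => ?_
    rw [Finset.mul_sum]
    exact Finset.sum_congr rfl fun j _ => by ring

end SecondLaw

theorem energy_drop_le_inv_mul_log {s : Type*} [Fintype s] [DecidableEq s] [Nonempty s]
    {Φ : Matrix s s ℂ →ₗ[ℂ] Matrix s s ℂ}
    (hΦpos : ∀ X : Matrix s s ℂ, X.PosSemidef → (Φ X).PosSemidef) (hΦtp : IsTP Φ) {c : ℝ}
    (hc : ((c : ℂ) • 1 - Φ 1).PosSemidef) {β : ℝ} (hβ : 0 < β) {H : Matrix s s ℂ}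
    (hH : H.IsHermitian) :
    (gibbs β H * H).trace.re - (Φ (gibbs β H) * H).trace.re ≤ β⁻¹ * Real.log c := by
  obtain ⟨V, E, hV, hV', hHE, hΓ⟩ := exists_gibbs_eq_sum_smul_colProj hβ.ne' hH
  set Z := ∑ j, Real.exp (-β * E j)
  have hZ : 0 < Z := Finset.sum_pos (fun j _ => Real.exp_pos _) Finset.univ_nonempty
  set p : s → ℝ := fun i => Real.exp (-β * E i) / Z
  have hp : ∀ i, 0 < p i := fun i => div_pos (Real.exp_pos _) hZ
  have hp₁ : ∑ i, p i = 1 := by rw [← Finset.sum_div, div_self hZ.ne']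
  have hlog : ∀ i j, E j - E i = β⁻¹ * Real.log (p i / p j) := fun i j => by
    rw [div_div_div_cancel_right₀ hZ.ne', ← Real.exp_sub, Real.log_exp]
    field_simp
    ring
  rw [energy_drop_eq_sum_transitionMatrix hV hV' hΦtp hHE hΓ]
  simp only [hlog, mul_left_comm _ β⁻¹, ← Finset.mul_sum]
  exact mul_le_mul_of_nonneg_left (sum_stochastic_mul_log_div_le_log hp hp₁
    (transitionMatrix_nonneg hΦpos) (sum_transitionMatrix_left hV hV' hΦtp)
    (sum_transitionMatrix_right_le hV hV' hc)) (inv_nonneg.2 hβ.le)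

/-- Tasaki-type second law: for `Φ(ρ) = Tr_A[U(ρ ⊗ ρ_A)U†]`
and the Gibbs state `Γ` of `H` at inverse temperature `β`, the energy drop
satisfies `Δ_drop ≤ β⁻¹ log d_A`. -/
theorem stmt16_tasaki_second_law {s a : Type*}
    [Fintype s] [DecidableEq s] [Fintype a] [DecidableEq a]
    (U : Matrix (s × a) (s × a) ℂ) (hU₁ : Uᴴ * U = 1) (hU₂ : U * Uᴴ = 1)
    (ρA : Matrix a a ℂ) (hρA : IsDensity ρA)
    (Φ : Matrix s s ℂ → Matrix s s ℂ)
    (hΦ : ∀ ρ, Φ ρ = ptraceA (U * (ρ ⊗ₖ ρA) * Uᴴ))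
    (β : ℝ) (hβ : 0 < β) (H : Matrix s s ℂ) (hH : H.IsHermitian) :
    (Matrix.trace (gibbs β H * H)).re - (Matrix.trace (Φ (gibbs β H) * H)).re
      ≤ β⁻¹ * Real.log (Fintype.card a) := by
  obtain rfl : Φ = dilationChannel U ρA := funext hΦ
  rcases isEmpty_or_nonempty s with hs | hs
  · have ha : Nonempty a := by
      by_contra h
      simpa [not_nonempty_iff.mp h] using hρA.2
    simpa [trace] using mul_nonneg (inv_nonneg.2 hβ.le)
      (Real.log_nonneg (by exact_mod_cast Fintype.card_pos))
  · refine energy_drop_le_inv_mul_log (fun X hX => dilationChannel_posSemidef hρA.1 hX)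
      (isTP_dilationChannel hU₁ hρA.2) ?_ hβ hH
    exact_mod_cast posSemidef_card_smul_one_sub_dilationChannel_one hU₂ hρA
end
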